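/- The set of points of M with trivial isotropy is the disjoint union M_{G⁴} = M₁ ∪ M₂ ∪ M₃ ∪ M₄, where M₁ = {(q¹,q²,0,p²) : (q¹−q²)×p² ≠ 0}, M₂ = {(q¹,q²,p¹,0) : (q¹−q²)×p¹ ≠ 0}, M₃ = {(q¹,q²,p¹,p²) : p¹×p² = 0, p¹ ≠ 0, p² ≠ 0, (q¹−q²)×p¹ ≠ 0}, and M₄ = {(q¹,q²,p¹,p²) : p¹×p² ≠ 0}. Equivalently, SE(3)_{(q,p)} = {(I,0)} if and only if (q,p) belongs to M₁ ∪ M₂ ∪ M₃ ∪ M₄. -/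

import Mathlib

/-!
An element `(A, a)` fixes `(q¹, q², p¹, p²)` iff `a = q¹ - A q¹` and the rotation `A` fixes the
three vectors `q¹ - q²`, `p¹`, `p²`. A rotation fixing two vectors `u, w` with `u × w ≠ 0` also
fixes `u × w`, hence fixes a basis and is the identity. If instead all pairwise cross products of
the three vectors vanish, they lie on one line `ℝ v`, and the rotation by `π` about `v` is a
nontrivial isotropy element. So the isotropy is trivial iff one of the three pairwise cross
products is nonzero, and a short case analysis identifies this condition with `M₁ ∪ M₂ ∪ M₃ ∪ M₄`.
-/

open Matrix

/-- Vectors in ℝ³. -/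
abbrev V3 : Type := Fin 3 → ℝ

/-- The two-body phase space M = ℝ³ × ℝ³ × ℝ³ × ℝ³, points (q¹, q², p¹, p²). -/
abbrev M2B : Type := V3 × V3 × V3 × V3

/-- A 3×3 real matrix is special orthogonal. -/
def SO3 (A : Matrix (Fin 3) (Fin 3) ℝ) : Prop := Aᵀ * A = 1 ∧ A.det = 1

/-- The action of (A, a) ∈ SE(3) on the phase space:
(A,a)·(q¹,q²,p¹,p²) = (Aq¹+a, Aq²+a, Ap¹, Ap²). -/
def act (A : Matrix (Fin 3) (Fin 3) ℝ) (a : V3) (m : M2B) : M2B :=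
  (A *ᵥ m.1 + a, A *ᵥ m.2.1 + a, A *ᵥ m.2.2.1, A *ᵥ m.2.2.2)

/-- The isotropy subgroup SE(3)_{(q,p)} of a point of M, as a set of pairs (A,a)
with A special orthogonal. -/
def isotropy (m : M2B) : Set (Matrix (Fin 3) (Fin 3) ℝ × V3) :=
  {g | SO3 g.1 ∧ act g.1 g.2 m = m}

/-- The momentum map J(q¹,q²,p¹,p²) = (q¹×p¹ + q²×p², p¹+p²). -/
def Jmom (m : M2B) : V3 × V3 :=
  (m.1 ⨯₃ m.2.2.1 + m.2.1 ⨯₃ m.2.2.2, m.2.2.1 + m.2.2.2)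

/-- G¹(x) = {(A,a) ∈ SE(3) : a = x − Ax}. -/
def G1 (x : V3) : Set (Matrix (Fin 3) (Fin 3) ℝ × V3) :=
  {g | SO3 g.1 ∧ g.2 = x - g.1 *ᵥ x}

/-- G²(y) = {(A,0) ∈ SE(3) : Ay = y}. -/
def G2 (y : V3) : Set (Matrix (Fin 3) (Fin 3) ℝ × V3) :=
  {g | SO3 g.1 ∧ g.1 *ᵥ y = y ∧ g.2 = 0}

/-- G³(x,y) = {(A,a) ∈ SE(3) : Ay = y and a = x − Ax}. -/
def G3 (x y : V3) : Set (Matrix (Fin 3) (Fin 3) ℝ × V3) :=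
  {g | SO3 g.1 ∧ g.1 *ᵥ y = y ∧ g.2 = x - g.1 *ᵥ x}

/-- G⁴ = {(I, 0)}, the trivial subgroup. -/
def G4 : Set (Matrix (Fin 3) (Fin 3) ℝ × V3) := {((1 : Matrix (Fin 3) (Fin 3) ℝ), (0 : V3))}

def M1 : Set M2B := {m | ∃ q1 q2 p2 : V3, (q1 - q2) ⨯₃ p2 ≠ 0 ∧ m = (q1, q2, 0, p2)}
def M2 : Set M2B := {m | ∃ q1 q2 p1 : V3, (q1 - q2) ⨯₃ p1 ≠ 0 ∧ m = (q1, q2, p1, 0)}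
def M3 : Set M2B :=
  {m | m.2.2.1 ⨯₃ m.2.2.2 = 0 ∧ m.2.2.1 ≠ 0 ∧ m.2.2.2 ≠ 0 ∧ (m.1 - m.2.1) ⨯₃ m.2.2.1 ≠ 0}
def M4 : Set M2B := {m | m.2.2.1 ⨯₃ m.2.2.2 ≠ 0}

section CrossProduct

variable {R : Type*} [CommRing R]

lemma transpose_mulVec_cross_mulVec (B : Matrix (Fin 3) (Fin 3) R) (u w : Fin 3 → R) :
    Bᵀ *ᵥ ((B *ᵥ u) ⨯₃ (B *ᵥ w)) = B.det • (u ⨯₃ w) := by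
  ext i
  fin_cases i <;>
    · simp [mulVec, dotProduct, cross_apply, Fin.sum_univ_three, det_fin_three]
      ring

lemma smul_eq_smul_of_cross_eq_zero {v x : Fin 3 → R} (h : v ⨯₃ x = 0) :
    (v ⬝ᵥ v) • x = (v ⬝ᵥ x) • v := by
  have := cross_cross_eq_smul_sub_smul' v v x
  rwa [h, map_zero, eq_comm, sub_eq_zero, eq_comm] at this

variable {K : Type*} [Field K] [LinearOrder K] [IsStrictOrderedRing K]

lemma cross_eq_zero_of_cross_eq_zero {v x y : Fin 3 → K} (hv : v ≠ 0) (hx : v ⨯₃ x = 0)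
    (hy : v ⨯₃ y = 0) : x ⨯₃ y = 0 := by
  have key : ((v ⬝ᵥ v) • x) ⨯₃ ((v ⬝ᵥ v) • y) = 0 := by
    rw [smul_eq_smul_of_cross_eq_zero hx, smul_eq_smul_of_cross_eq_zero hy]
    simp [cross_self]
  simpa [dotProduct_self_eq_zero, hv] using key

lemma exists_ne_zero_cross_eq_zero {x y z : Fin 3 → K} (hxy : x ⨯₃ y = 0) (hxz : x ⨯₃ z = 0)
    (hyz : y ⨯₃ z = 0) : ∃ v ≠ 0, v ⨯₃ x = 0 ∧ v ⨯₃ y = 0 ∧ v ⨯₃ z = 0 := by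
  by_cases hx : x = 0
  · by_cases hy : y = 0
    · by_cases hz : z = 0
      · exact ⟨Pi.single 0 1, by simp, by simp [hx, hy, hz]⟩
      · exact ⟨z, hz, by simp [hx, hy, cross_self]⟩
    · exact ⟨y, hy, by simp [hx], cross_self y, hyz⟩
  · exact ⟨x, hx, cross_self x, hxy, hxz⟩

end CrossProduct

/-- The rotation by `π` about the axis `ℝ v`, i.e. the reflection of `ℝ³` in the line `ℝ v`. -/
noncomputable def rotPi (v : V3) : Matrix (Fin 3) (Fin 3) ℝ :=
  (2 / (v ⬝ᵥ v)) • vecMulVec v v - 1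

lemma rotPi_mulVec_of_cross_eq_zero {v x : V3} (hv : v ⬝ᵥ v ≠ 0) (hx : v ⨯₃ x = 0) :
    rotPi v *ᵥ x = x := by
  rw [rotPi, sub_mulVec, smul_mulVec, vecMulVec_mulVec, op_smul_eq_smul,
    ← smul_eq_smul_of_cross_eq_zero hx, smul_smul, div_mul_cancel₀ _ hv, one_mulVec, two_smul,
    add_sub_cancel_right]

lemma rotPi_transpose_mul_self {v : V3} (hv : v ⬝ᵥ v ≠ 0) : (rotPi v)ᵀ * rotPi v = 1 := by
  rw [show (rotPi v)ᵀ = rotPi v by simp [rotPi, transpose_vecMulVec]]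
  have hNN : vecMulVec v v * vecMulVec v v = (v ⬝ᵥ v) • vecMulVec v v := by
    rw [vecMulVec_mul_vecMulVec, vecMulVec_smul]
  simp only [rotPi, sub_mul, mul_sub, smul_mul_smul_comm, hNN, smul_smul, mul_one, one_mul]
  match_scalars <;> field_simp
  ring

lemma rotPi_det {v : V3} (hv : v ⬝ᵥ v ≠ 0) : (rotPi v).det = 1 := by
  have : rotPi v = -(1 + replicateCol Unit (-(2 / (v ⬝ᵥ v)) • v) * replicateRow Unit v) := by
    rw [rotPi, ← vecMulVec_eq, smul_vecMulVec, neg_smul, neg_add, neg_neg, neg_add_eq_sub]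
  rw [this, det_neg, det_one_add_replicateCol_mul_replicateRow, dotProduct_smul, dotProduct_comm,
    smul_eq_mul, neg_mul, div_mul_cancel₀ _ hv]
  norm_num

lemma rotPi_ne_one {v : V3} (hv : v ⬝ᵥ v ≠ 0) : rotPi v ≠ 1 := by
  intro h
  have := congrArg trace h
  rw [rotPi, trace_sub, trace_smul, trace_vecMulVec, smul_eq_mul, div_mul_cancel₀ _ hv,
    trace_one] at this
  norm_num at this

lemma SO3.mulVec_cross {A : Matrix (Fin 3) (Fin 3) ℝ} (hA : SO3 A) (u w : V3) :
    A *ᵥ (u ⨯₃ w) = (A *ᵥ u) ⨯₃ (A *ᵥ w) := by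
  calc A *ᵥ (u ⨯₃ w) = A *ᵥ (A.det • (u ⨯₃ w)) := by rw [hA.2, one_smul]
    _ = (A * Aᵀ) *ᵥ ((A *ᵥ u) ⨯₃ (A *ᵥ w)) := by
      rw [← transpose_mulVec_cross_mulVec, mulVec_mulVec]
    _ = (A *ᵥ u) ⨯₃ (A *ᵥ w) := by rw [mul_eq_one_comm.mp hA.1, one_mulVec]

lemma SO3.eq_one_of_mulVec_eq {A : Matrix (Fin 3) (Fin 3) ℝ} (hA : SO3 A) {u w : V3}
    (hu : A *ᵥ u = u) (hw : A *ᵥ w = w) (huw : u ⨯₃ w ≠ 0) : A = 1 := by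
  have hc : A *ᵥ (u ⨯₃ w) = u ⨯₃ w := by rw [hA.mulVec_cross, hu, hw]
  set B : Matrix (Fin 3) (Fin 3) ℝ := of ![u, w, u ⨯₃ w]
  have hdet : B.det = (u ⨯₃ w) ⬝ᵥ (u ⨯₃ w) := by
    rw [← triple_product_permutation, ← triple_product_permutation, triple_product_eq_det]
    rfl
  have hB : IsUnit B := by
    rw [isUnit_iff_isUnit_det, hdet, isUnit_iff_ne_zero]
    exact dotProduct_self_eq_zero.not.mpr huw
  have hBA : B * Aᵀ = B * 1 := by
    ext i : 1
    fin_cases i <;> simp [B, vecMul_transpose, hu, hw, hc]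
  exact transpose_eq_one.mp (hB.mul_left_cancel hBA)

lemma mem_isotropy_iff {m : M2B} {A : Matrix (Fin 3) (Fin 3) ℝ} {a : V3} :
    (A, a) ∈ isotropy m ↔ SO3 A ∧ A *ᵥ (m.1 - m.2.1) = m.1 - m.2.1 ∧
      A *ᵥ m.2.2.1 = m.2.2.1 ∧ A *ᵥ m.2.2.2 = m.2.2.2 ∧ a = m.1 - A *ᵥ m.1 := by
  obtain ⟨q1, q2, p1, p2⟩ := m
  simp only [isotropy, act, Set.mem_ofPred_eq, Prod.mk.injEq, mulVec_sub]
  refine and_congr_right fun _ => ⟨fun ⟨h1, h2, h3, h4⟩ => ⟨?_, h3, h4, ?_⟩,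
    fun ⟨hd, h3, h4, ha⟩ => ⟨?_, ?_, h3, h4⟩⟩
  · linear_combination h1 - h2
  · exact eq_sub_of_add_eq' h1
  · rw [ha, add_sub_cancel]
  · linear_combination ha - hd

lemma isotropy_eq_G4_iff {m : M2B} : isotropy m = G4 ↔
    ∀ A, SO3 A → A *ᵥ (m.1 - m.2.1) = m.1 - m.2.1 → A *ᵥ m.2.2.1 = m.2.2.1 →
      A *ᵥ m.2.2.2 = m.2.2.2 → A = 1 := by
  constructor
  · intro h A hA hd h1 h2
    have : (A, m.1 - A *ᵥ m.1) ∈ G4 := h ▸ mem_isotropy_iff.mpr ⟨hA, hd, h1, h2, rfl⟩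
    exact congrArg Prod.fst this
  · intro h
    ext ⟨A, a⟩
    rw [mem_isotropy_iff, G4, Set.mem_singleton_iff, Prod.mk.injEq]
    constructor
    · rintro ⟨hA, hd, h1, h2, rfl⟩
      obtain rfl := h A hA hd h1 h2
      simp
    · rintro ⟨rfl, rfl⟩
      simp [SO3]

lemma isotropy_eq_G4_iff_cross_ne_zero {m : M2B} : isotropy m = G4 ↔
    (m.1 - m.2.1) ⨯₃ m.2.2.1 ≠ 0 ∨ (m.1 - m.2.1) ⨯₃ m.2.2.2 ≠ 0 ∨ m.2.2.1 ⨯₃ m.2.2.2 ≠ 0 := by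
  rw [isotropy_eq_G4_iff]
  constructor
  · contrapose!
    rintro ⟨hd1, hd2, h12⟩
    obtain ⟨v, hv, hvd, hv1, hv2⟩ := exists_ne_zero_cross_eq_zero hd1 hd2 h12
    have hvv : v ⬝ᵥ v ≠ 0 := dotProduct_self_eq_zero.not.mpr hv
    exact ⟨rotPi v, ⟨rotPi_transpose_mul_self hvv, rotPi_det hvv⟩,
      rotPi_mulVec_of_cross_eq_zero hvv hvd, rotPi_mulVec_of_cross_eq_zero hvv hv1,
      rotPi_mulVec_of_cross_eq_zero hvv hv2, rotPi_ne_one hvv⟩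
  · rintro (h | h | h) A hA hd h1 h2
    · exact hA.eq_one_of_mulVec_eq hd h1 h
    · exact hA.eq_one_of_mulVec_eq hd h2 h
    · exact hA.eq_one_of_mulVec_eq h1 h2 h

lemma mem_M1_iff {m : M2B} : m ∈ M1 ↔ m.2.2.1 = 0 ∧ (m.1 - m.2.1) ⨯₃ m.2.2.2 ≠ 0 := by
  obtain ⟨q1, q2, p1, p2⟩ := m
  constructor
  · rintro ⟨_, _, _, h, ⟨⟩⟩
    exact ⟨rfl, h⟩
  · rintro ⟨rfl, h⟩
    exact ⟨q1, q2, p2, h, rfl⟩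

lemma mem_M2_iff {m : M2B} : m ∈ M2 ↔ m.2.2.2 = 0 ∧ (m.1 - m.2.1) ⨯₃ m.2.2.1 ≠ 0 := by
  obtain ⟨q1, q2, p1, p2⟩ := m
  constructor
  · rintro ⟨_, _, _, h, ⟨⟩⟩
    exact ⟨rfl, h⟩
  · rintro ⟨rfl, h⟩
    exact ⟨q1, q2, p1, h, rfl⟩

lemma mem_M_iff_cross_ne_zero {m : M2B} : m ∈ M1 ∪ M2 ∪ M3 ∪ M4 ↔
    (m.1 - m.2.1) ⨯₃ m.2.2.1 ≠ 0 ∨ (m.1 - m.2.1) ⨯₃ m.2.2.2 ≠ 0 ∨ m.2.2.1 ⨯₃ m.2.2.2 ≠ 0 := by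
  obtain ⟨q1, q2, p1, p2⟩ := m
  simp only [Set.mem_union, mem_M1_iff, mem_M2_iff, M3, M4, Set.mem_ofPred_eq]
  constructor
  · rintro (((⟨-, h⟩ | ⟨-, h⟩) | ⟨-, -, -, h⟩) | h) <;> tauto
  · intro h
    by_cases h12 : p1 ⨯₃ p2 = 0
    · by_cases hp1 : p1 = 0
      · exact Or.inl (Or.inl (Or.inl ⟨hp1, by simpa [hp1] using h⟩))
      by_cases hp2 : p2 = 0
      · exact Or.inl (Or.inl (Or.inr ⟨hp2, by simpa [hp2] using h⟩))
      refine Or.inl (Or.inr ⟨h12, hp1, hp2, fun hd1 => ?_⟩)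
      have hd2 : (q1 - q2) ⨯₃ p2 = 0 :=
        cross_eq_zero_of_cross_eq_zero hp1 (by rw [← cross_anticomm, hd1, neg_zero]) h12
      rcases h with h | h | h <;> contradiction
    · exact Or.inr h12

theorem stmt4 :
    ({m : M2B | isotropy m = G4} = M1 ∪ M2 ∪ M3 ∪ M4 ∧
      Disjoint M1 M2 ∧ Disjoint M1 M3 ∧ Disjoint M1 M4 ∧
      Disjoint M2 M3 ∧ Disjoint M2 M4 ∧ Disjoint M3 M4) ∧
    ∀ m : M2B, isotropy m = G4 ↔ m ∈ M1 ∪ M2 ∪ M3 ∪ M4 := by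
  have key (m : M2B) : isotropy m = G4 ↔ m ∈ M1 ∪ M2 ∪ M3 ∪ M4 :=
    isotropy_eq_G4_iff_cross_ne_zero.trans mem_M_iff_cross_ne_zero.symm
  refine ⟨⟨Set.ext key, ?_, ?_, ?_, ?_, ?_, ?_⟩, key⟩ <;>
    · rw [Set.disjoint_left]
      intro m h h'
      simp_all [mem_M1_iff, mem_M2_iff, M3, M4]
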